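/- Let 0 ≤ h ∈ L¹(a,b) with h ≢ 0 and let v ∈ C¹([a,b]) be the solution of −(φ(v'))' = h in (a,b), v(a) = v(b) = 0. Then v ∈ P°, that is, v > 0 on (a,b) and v'(b) < 0 < v'(a). -/

import Mathlib

open MeasureTheory Set Filter

/-- `φ` is an odd increasing homeomorphism of `ℝ`. -/
def OddIncHomeo (φ : ℝ → ℝ) : Prop :=
  StrictMono φ ∧ Continuous φ ∧ Function.Surjective φ ∧ ∀ x, φ (-x) = -φ x

/-- `v` is `C¹` on `[a,b]` with derivative `v'`. -/
def C1On (v v' : ℝ → ℝ) (a b : ℝ) : Prop :=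
  ContinuousOn v (Icc a b) ∧ ContinuousOn v' (Icc a b) ∧
  ∀ x ∈ Icc a b, HasDerivWithinAt v (v' x) (Icc a b) x

/-- `v` (with derivative `v'`) is a solution of `-(φ(v'))' = h` in `(a,b)`,
`v(a) = v(b) = 0`. -/
def IsSolutionH (φ h : ℝ → ℝ) (a b : ℝ) (v v' : ℝ → ℝ) : Prop :=
  C1On v v' a b ∧ v a = 0 ∧ v b = 0 ∧
  ∀ x ∈ Icc a b, φ (v' x) = φ (v' a) - ∫ s in a..x, h s

/-!
Since `h ≥ 0`, `x ↦ φ (v' x)` is nonincreasing, hence so is `v'`, and `v' b < v' a` because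
`∫ h > 0`. As `∫_a^b v' = v b - v a = 0`, the derivative must change sign: `v' a > 0 > v' b`.
For `x ∈ (a,b)`, if `v' x ≥ 0` then `v' ≥ 0` on `[a,x]` and `v x = ∫_a^x v' > 0`; if `v' x < 0`
then `v' < 0` on `[x,b]` and `v x = -∫_x^b v' > 0`.
-/

section IntervalIntegral

variable {h : ℝ → ℝ} {a b : ℝ}

lemma monotoneOn_intervalIntegral_of_ae_nonneg (hh : IntervalIntegrable h volume a b)
    (hh0 : 0 ≤ᵐ[volume.restrict (Ioc a b)] h) :
    MonotoneOn (fun x ↦ ∫ t in a..x, h t) (Icc a b) := fun _ hx _ hy hxy ↦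
  intervalIntegral.integral_mono_interval le_rfl hx.1 hxy
    (ae_restrict_of_ae_restrict_of_subset (Ioc_subset_Ioc_right hy.2) hh0)
    (hh.mono_set (uIcc_subset_uIcc_left (mem_uIcc_of_le hy.1 hy.2)))

lemma intervalIntegral_pos_of_ae_nonneg_of_not_ae_eq_zero (hab : a ≤ b)
    (hh : IntervalIntegrable h volume a b) (hh0 : 0 ≤ᵐ[volume.restrict (Ioc a b)] h)
    (hne : ¬ h =ᵐ[volume.restrict (Ioc a b)] 0) :
    0 < ∫ t in a..b, h t :=
  (intervalIntegral.integral_nonneg_of_ae_restrict hab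
    (by rwa [Measure.restrict_congr_set Ioc_ae_eq_Icc.symm])).lt_of_ne
    fun h0 ↦ hne ((intervalIntegral.integral_eq_zero_iff_of_le_of_nonneg_ae hab hh0 hh).1 h0.symm)

end IntervalIntegral

namespace C1On

variable {v v' : ℝ → ℝ} {a b : ℝ}

lemma mono (hv : C1On v v' a b) {c d : ℝ} (hac : a ≤ c) (hdb : d ≤ b) : C1On v v' c d :=
  have hsub : Icc c d ⊆ Icc a b := Icc_subset_Icc hac hdb
  ⟨hv.1.mono hsub, hv.2.1.mono hsub, fun x hx ↦ (hv.2.2 x (hsub hx)).mono hsub⟩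

lemma integral_eq_sub (hv : C1On v v' a b) (hab : a ≤ b) :
    ∫ t in a..b, v' t = v b - v a :=
  intervalIntegral.integral_eq_sub_of_hasDerivAt_of_le hab hv.1
    (fun x hx ↦ (hv.2.2 x (Ioo_subset_Icc_self hx)).hasDerivAt (Icc_mem_nhds hx.1 hx.2))
    (hv.2.1.intervalIntegrable_of_Icc hab)

lemma deriv_left_pos (hv : C1On v v' a b) (hanti : AntitoneOn v' (Icc a b)) (hab : a < b)
    (hvab : v a = v b) (hlt : v' b < v' a) : 0 < v' a := by
  by_contra! ha
  have hpos : 0 < ∫ t in a..b, -v' t :=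
    intervalIntegral.integral_pos hab hv.2.1.neg
      (fun t ht ↦ neg_nonneg.2 ((hanti (left_mem_Icc.2 hab.le) (Ioc_subset_Icc_self ht)
        ht.1.le).trans ha))
      ⟨b, right_mem_Icc.2 hab.le, neg_pos.2 (hlt.trans_le ha)⟩
  rw [intervalIntegral.integral_neg, hv.integral_eq_sub hab.le, hvab, sub_self, neg_zero] at hpos
  exact hpos.false

lemma deriv_right_neg (hv : C1On v v' a b) (hanti : AntitoneOn v' (Icc a b)) (hab : a < b)
    (hvab : v a = v b) (hlt : v' b < v' a) : v' b < 0 := by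
  by_contra! hb
  have hpos : 0 < ∫ t in a..b, v' t :=
    intervalIntegral.integral_pos hab hv.2.1
      (fun t ht ↦ hb.trans (hanti (Ioc_subset_Icc_self ht) (right_mem_Icc.2 hab.le) ht.2))
      ⟨a, left_mem_Icc.2 hab.le, hb.trans_lt hlt⟩
  rw [hv.integral_eq_sub hab.le, hvab, sub_self] at hpos
  exact hpos.false

lemma pos_of_antitoneOn (hv : C1On v v' a b) (hanti : AntitoneOn v' (Icc a b))
    (hva : v a = 0) (hvb : v b = 0) (ha : 0 < v' a) : ∀ x ∈ Ioo a b, 0 < v x := by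
  intro x hx
  have hxI : x ∈ Icc a b := Ioo_subset_Icc_self hx
  rcases le_or_gt 0 (v' x) with hx0 | hx0
  · have hpos : 0 < ∫ t in a..x, v' t :=
      intervalIntegral.integral_pos hx.1 (hv.mono le_rfl hx.2.le).2.1
        (fun t ht ↦ hx0.trans (hanti ⟨ht.1.le, ht.2.trans hx.2.le⟩ hxI ht.2))
        ⟨a, left_mem_Icc.2 hx.1.le, ha⟩
    rwa [(hv.mono le_rfl hx.2.le).integral_eq_sub hx.1.le, hva, sub_zero] at hpos
  · have hpos : 0 < ∫ t in x..b, -v' t :=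
      intervalIntegral.integral_pos hx.2 (hv.mono hx.1.le le_rfl).2.1.neg
        (fun t ht ↦ neg_nonneg.2 ((hanti hxI ⟨hx.1.le.trans ht.1.le, ht.2⟩ ht.1.le).trans hx0.le))
        ⟨x, left_mem_Icc.2 hx.2.le, neg_pos.2 hx0⟩
    rwa [intervalIntegral.integral_neg, (hv.mono hx.1.le le_rfl).integral_eq_sub hx.2.le, hvb,
      zero_sub, neg_neg] at hpos

end C1On

namespace IsSolutionH

variable {φ h v v' : ℝ → ℝ} {a b : ℝ}

lemma antitoneOn_deriv (hv : IsSolutionH φ h a b v v') (hφ : StrictMono φ)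
    (hh : IntervalIntegrable h volume a b) (hh0 : 0 ≤ᵐ[volume.restrict (Ioc a b)] h) :
    AntitoneOn v' (Icc a b) := fun x hx y hy hxy ↦ by
  rw [← hφ.le_iff_le, hv.2.2.2 x hx, hv.2.2.2 y hy]
  exact sub_le_sub_left (monotoneOn_intervalIntegral_of_ae_nonneg hh hh0 hx hy hxy) _

lemma deriv_right_lt_deriv_left (hv : IsSolutionH φ h a b v v') (hφ : StrictMono φ)
    (hab : a ≤ b) (hpos : 0 < ∫ t in a..b, h t) : v' b < v' a := by
  rw [← hφ.lt_iff_lt, hv.2.2.2 b (right_mem_Icc.2 hab)]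
  exact sub_lt_self _ hpos

end IsSolutionH

theorem solution_in_Pint
    (a b : ℝ) (hab : a < b) (φ : ℝ → ℝ) (hφ : OddIncHomeo φ)
    (h : ℝ → ℝ) (hh : IntegrableOn h (Icc a b))
    (hh0 : ∀ᵐ x ∂(volume : Measure ℝ), x ∈ Ioo a b → 0 ≤ h x)
    (hhne : ¬ (∀ᵐ x ∂(volume : Measure ℝ), x ∈ Ioo a b → h x = 0))
    (v v' : ℝ → ℝ) (hv : IsSolutionH φ h a b v v') :
    (∀ x ∈ Ioo a b, 0 < v x) ∧ v' b < 0 ∧ 0 < v' a := by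
  have hIoc : volume.restrict (Ioo a b) = volume.restrict (Ioc a b) :=
    Measure.restrict_congr_set Ioo_ae_eq_Ioc
  have hh0' : 0 ≤ᵐ[volume.restrict (Ioc a b)] h := by
    rw [← hIoc]
    exact (ae_restrict_iff' measurableSet_Ioo).2 hh0
  have hhne' : ¬ h =ᵐ[volume.restrict (Ioc a b)] 0 := by
    rwa [← hIoc, EventuallyEq, ae_restrict_iff' measurableSet_Ioo]
  have hhi : IntervalIntegrable h volume a b :=
    (intervalIntegrable_iff_integrableOn_Icc_of_le hab.le).2 hh
  have hanti := hv.antitoneOn_deriv hφ.1 hhi hh0'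
  have hlt := hv.deriv_right_lt_deriv_left hφ.1 hab.le
    (intervalIntegral_pos_of_ae_nonneg_of_not_ae_eq_zero hab.le hhi hh0' hhne')
  obtain ⟨hC1, hva, hvb, -⟩ := hv
  have hvab : v a = v b := hva.trans hvb.symm
  have ha := hC1.deriv_left_pos hanti hab hvab hlt
  exact ⟨hC1.pos_of_antitoneOn hanti hva hvb ha, hC1.deriv_right_neg hanti hab hvab hlt, ha⟩
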